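/- Let n_1 ∈ [l_1 m_{k−1}, (l_1+1) m_{k−1} − 1] and n_2 ∈ [l_2 m_{k−1}, (l_2+1) m_{k−1} − 1] with 1 ≤ l_1 < l_2 ≤ p_k − 1, and let e be any interval of the form [j/m_{k−1}, (j+1)/m_{k−1}). Then ∫_e w_{n_1} · conj(w_{n_2}) = 0; i.e., such Vilenkin functions are orthogonal in L²(e). -/

import Mathlib

open MeasureTheory Finset

noncomputable section

/-- Partial products: `vm p 0 = 1`, `vm p k = p 0 * p 1 * ... * p (k-1)`
(so `vm p k` is the paper's `m_k` with `p i` the paper's `p_{i+1}`). -/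
def vm (p : ℕ → ℕ) : ℕ → ℕ
  | 0 => 1
  | k+1 => vm p k * p k

/-- The `i`-th mixed-radix digit of `n` (0-indexed: this is the paper's `α_{i+1}`). -/
def vdigit (p : ℕ → ℕ) (n i : ℕ) : ℕ := n / vm p i % p i

/-- Digitwise addition mod `p i` of the mixed-radix digits (the paper's `k ∔ l`). -/
def vadd (p : ℕ → ℕ) (a b : ℕ) : ℕ :=
  ∑ i ∈ Finset.range (a + b + 1), (vdigit p a i + vdigit p b i) % p i * vm p i

/-- Digitwise negation: the inverse of `a` with respect to `vadd`. -/
def vneg (p : ℕ → ℕ) (a : ℕ) : ℕ :=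
  ∑ i ∈ Finset.range (a + 1), (p i - vdigit p a i) % p i * vm p i

/-- Digitwise subtraction (the paper's `n ∸ a`). -/
def vsub (p : ℕ → ℕ) (a b : ℕ) : ℕ := vadd p a (vneg p b)

/-- The generalized Rademacher function `rad p k = r_{k+1}`:
constant on `[j/m_{k+1}, (j+1)/m_{k+1})` with value `exp(2πi (j mod p_{k+1}) / p_{k+1})`. -/
def rad (p : ℕ → ℕ) (k : ℕ) (x : ℝ) : ℂ :=
  Complex.exp (2 * Real.pi * Complex.I *
    ((⌊x * (vm p (k+1) : ℝ)⌋ % (p k : ℤ) : ℤ) : ℂ) / (p k : ℂ))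

/-- The Vilenkin function `w_n = ∏ r_{i+1}^{α_{i+1}}` where `α` are the digits of `n`. -/
def vw (p : ℕ → ℕ) (n : ℕ) (x : ℝ) : ℂ :=
  ∏ i ∈ Finset.range (n + 1), rad p i x ^ vdigit p n i

/-- The Vilenkin–Fourier coefficient `(f, w_n)`. -/
def vip (p : ℕ → ℕ) (f : ℝ → ℂ) (n : ℕ) : ℂ :=
  ∫ x in Set.Ico (0:ℝ) 1, f x * (starRingEnd ℂ) (vw p n x)

/-- `E_k f = ∑_{n < m_k} (f, w_n) w_n`. -/
def vE (p : ℕ → ℕ) (k : ℕ) (f : ℝ → ℂ) (x : ℝ) : ℂ :=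
  ∑ n ∈ Finset.range (vm p k), vip p f n * vw p n x

/-- The martingale difference `Δ_k f = E_k f - E_{k-1} f` (for `k ≥ 1`). -/
def vD (p : ℕ → ℕ) (k : ℕ) (f : ℝ → ℂ) (x : ℝ) : ℂ :=
  vE p k f x - vE p (k-1) f x

/-- The block projection `Δ_{k,l} f = ∑_{n = l·m_{k-1}}^{(l+1)m_{k-1}-1} (f, w_n) w_n`. -/
def vDkl (p : ℕ → ℕ) (k l : ℕ) (f : ℝ → ℂ) (x : ℝ) : ℂ :=
  ∑ n ∈ Finset.Ico (l * vm p (k-1)) ((l+1) * vm p (k-1)), vip p f n * vw p n x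

/-- The martingale square function `S f = (|Δ_0 f|² + ∑_{k≥1} |Δ_k f|²)^{1/2}`. -/
def vS (p : ℕ → ℕ) (f : ℝ → ℂ) (x : ℝ) : ℝ :=
  Real.sqrt (‖vE p 0 f x‖^2 + ∑' k : ℕ, ‖vD p (k+1) f x‖^2)

/-- The Vilenkin square function
`S̃ f = (|Δ_0 f|² + ∑_{k≥1} ∑_{l=1}^{p_k-1} |Δ_{k,l} f|²)^{1/2}`. -/
def vtS (p : ℕ → ℕ) (f : ℝ → ℂ) (x : ℝ) : ℝ :=
  Real.sqrt (‖vE p 0 f x‖^2 + ∑' k : ℕ, ∑ l ∈ Finset.Ico 1 (p k), ‖vDkl p (k+1) l f x‖^2)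

/-!
On an atom `e = [j/m_K, (j+1)/m_K)` the Rademacher functions `r_1, …, r_K` are constant, and an
index `n` of the block `[l m_K, (l+1) m_K)` has top digit `l` and no higher digits, so
`w_n = C_n · r_{K+1}^l` on `e`. Hence `∫_e w_{n₁} conj(w_{n₂})` is a constant times
`∫_e r_{K+1}^{l₁} conj(r_{K+1})^{l₂}`. On `e` the function `r_{K+1}` runs through `ω^0, …, ω^{p-1}`
(`ω = e^{2πi/p}`, `p = p_{K+1}`) on subintervals of equal length, so this integral is a multiple of
`∑_t (ω^{l₁ - l₂})^t`, which vanishes because `ω^{l₁ - l₂} ≠ 1` is a `p`-th root of unity.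
-/

section

variable {p : ℕ → ℕ}

lemma vm_pos (hp : ∀ i, 0 < p i) : ∀ k, 0 < vm p k
  | 0 => Nat.one_pos
  | k + 1 => Nat.mul_pos (vm_pos hp k) (hp k)

lemma vm_dvd_vm {i j : ℕ} (h : i ≤ j) : vm p i ∣ vm p j := by
  induction j, h using Nat.le_induction with
  | base => rfl
  | succ n _ ih => exact ih.mul_right _

lemma vm_le_vm (hp : ∀ i, 0 < p i) {i j : ℕ} (h : i ≤ j) : vm p i ≤ vm p j :=
  Nat.le_of_dvd (vm_pos hp j) (vm_dvd_vm h)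

lemma lt_vm (hp : ∀ i, 2 ≤ p i) : ∀ k, k < vm p k
  | 0 => Nat.one_pos
  | k + 1 => by
    have := lt_vm hp k
    have := hp k
    show k + 1 < vm p k * p k
    nlinarith

lemma vdigit_eq_zero_of_lt {n i : ℕ} (h : n < vm p i) : vdigit p n i = 0 := by
  simp [vdigit, Nat.div_eq_of_lt h]

lemma vdigit_eq_of_mem_Ico {l n K : ℕ} (hl : l < p K)
    (hn : n ∈ Ico (l * vm p K) ((l + 1) * vm p K)) : vdigit p n K = l := by
  rw [mem_Ico] at hn
  rw [vdigit, Nat.div_eq_of_lt_le hn.1 hn.2, Nat.mod_eq_of_lt hl]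

lemma prod_range_rad_pow_vdigit_of_lt_vm (hp : ∀ i, 0 < p i) {n N M : ℕ} (hn : n < vm p N)
    (hNM : N ≤ M) (x : ℝ) :
    ∏ i ∈ range M, rad p i x ^ vdigit p n i = ∏ i ∈ range N, rad p i x ^ vdigit p n i := by
  refine (prod_subset (range_subset_range.mpr hNM) fun i _ hi => ?_).symm
  rw [vdigit_eq_zero_of_lt (hn.trans_le (vm_le_vm hp (by simpa using hi))), pow_zero]

lemma vw_eq_prod_range (hp : ∀ i, 2 ≤ p i) {n N : ℕ} (hn : n < vm p N) (x : ℝ) :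
    vw p n x = ∏ i ∈ range N, rad p i x ^ vdigit p n i := by
  have hp' : ∀ i, 0 < p i := fun i => (hp i).trans_lt' two_pos
  rw [vw, ← prod_range_rad_pow_vdigit_of_lt_vm hp' hn (le_max_right (n + 1) N),
    prod_range_rad_pow_vdigit_of_lt_vm hp' ((lt_add_one n).trans (lt_vm hp _)) (le_max_left _ _)]

lemma floor_mul_eq_of_mem_Ico {c : ℝ} (hc : 0 < c) {s : ℤ} {x : ℝ}
    (hx : x ∈ Set.Ico (s / c) ((s + 1) / c)) : ⌊x * c⌋ = s := by
  rw [Set.mem_Ico, div_le_iff₀ hc, lt_div_iff₀ hc] at hx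
  exact Int.floor_eq_iff.mpr hx

lemma floor_mul_vm_of_le (hp : ∀ i, 0 < p i) {i K : ℕ} (h : i ≤ K) (x : ℝ) :
    ⌊x * vm p i⌋ = ⌊x * vm p K⌋ / (vm p K / vm p i : ℕ) := by
  obtain ⟨d, hd⟩ := vm_dvd_vm (p := p) h
  have hi := vm_pos hp i
  have hd0 : (d : ℝ) ≠ 0 := by
    have := vm_pos hp K
    rw [hd] at this
    exact_mod_cast (Nat.pos_of_mul_pos_left this).ne'
  rw [← Int.floor_div_natCast, hd, Nat.mul_div_cancel_left _ hi]
  push_cast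
  field_simp

lemma rad_eq_of_floor_eq (hp : ∀ i, 0 < p i) {i K : ℕ} (hi : i < K) {x y : ℝ}
    (hxy : ⌊x * vm p K⌋ = ⌊y * vm p K⌋) : rad p i x = rad p i y := by
  unfold rad
  rw [floor_mul_vm_of_le hp hi x, floor_mul_vm_of_le hp hi y, hxy]

lemma vw_eq_prod_mul_rad_pow (hp : ∀ i, 2 ≤ p i) {K l n : ℕ} (hl : l < p K)
    (hn : n ∈ Ico (l * vm p K) ((l + 1) * vm p K)) (x : ℝ) :
    vw p n x = (∏ i ∈ range K, rad p i x ^ vdigit p n i) * rad p K x ^ l := by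
  have hn' : n < vm p (K + 1) :=
    (mem_Ico.mp hn).2.trans_le (by rw [vm, mul_comm (vm p K)]; exact Nat.mul_le_mul_right _ hl)
  rw [vw_eq_prod_range hp hn', prod_range_succ, vdigit_eq_of_mem_Ico hl hn]

lemma eqOn_comp_floor_mul {α : Type*} {c : ℝ} (hc : 0 < c) (h : ℤ → α) (s : ℤ) :
    Set.EqOn (fun x => h ⌊x * c⌋) (fun _ => h s) (Set.Ico (s / c) ((s + 1) / c)) :=
  fun _ hx => congrArg h (floor_mul_eq_of_mem_Ico hc hx)

lemma Ico_div_union_Ico_div {c : ℝ} (hc : 0 < c) (a : ℤ) (b : ℕ) :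
    Set.Ico (a / c) ((a + b) / c) ∪ Set.Ico ((↑(a + b) : ℝ) / c) ((↑(a + b) + 1) / c)
      = Set.Ico (a / c) ((a + ↑(b + 1)) / c) := by
  push_cast
  rw [← add_assoc]
  exact Set.Ico_union_Ico_eq_Ico (div_le_div_of_nonneg_right (by simp) hc.le)
    (div_le_div_of_nonneg_right (by simp) hc.le)

section StepFunction

variable {E : Type*} [NormedAddCommGroup E] {c : ℝ} (hc : 0 < c) (h : ℤ → E)
include hc

lemma integrableOn_comp_floor_mul_Ico (s : ℤ) :
    IntegrableOn (fun x => h ⌊x * c⌋) (Set.Ico (s / c) ((s + 1) / c)) :=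
  (integrableOn_const measure_Ico_lt_top.ne).congr_fun (eqOn_comp_floor_mul hc h s).symm
    measurableSet_Ico

lemma integrableOn_comp_floor_mul (a : ℤ) (b : ℕ) :
    IntegrableOn (fun x => h ⌊x * c⌋) (Set.Ico (a / c) ((a + b) / c)) := by
  induction b with
  | zero => simp
  | succ b ih =>
    rw [← Ico_div_union_Ico_div hc]
    exact ih.union (integrableOn_comp_floor_mul_Ico hc h _)

lemma setIntegral_comp_floor_mul [NormedSpace ℝ E] [CompleteSpace E] (a : ℤ) (b : ℕ) :
    ∫ x in Set.Ico (a / c) ((a + b) / c), h ⌊x * c⌋ = c⁻¹ • ∑ t ∈ range b, h (a + t) := by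
  induction b with
  | zero => simp
  | succ b ih =>
    have hlen (s : ℤ) : volume.real (Set.Ico (s / c) ((s + 1) / c)) = c⁻¹ := by
      rw [Real.volume_real_Ico_of_le (div_le_div_of_nonneg_right (by simp) hc.le)]
      field_simp
      ring
    rw [← Ico_div_union_Ico_div hc, setIntegral_union _ measurableSet_Ico
      (integrableOn_comp_floor_mul hc h a b) (integrableOn_comp_floor_mul_Ico hc h _), ih,
      setIntegral_congr_fun measurableSet_Ico (eqOn_comp_floor_mul hc h _), setIntegral_const,
      hlen, sum_range_succ, smul_add]
    exact Set.Ico_disjoint_Ico.mpr (by simp)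

end StepFunction

lemma sum_pow_mul_conj_pow_eq_zero {ω : ℂ} {m l₁ l₂ : ℕ} (hω : IsPrimitiveRoot ω m)
    (hl₁ : l₁ < m) (hl₂ : l₂ < m) (hne : l₁ ≠ l₂) :
    ∑ t ∈ range m, (ω ^ t) ^ l₁ * (starRingEnd ℂ) (ω ^ t) ^ l₂ = 0 := by
  have hm : m ≠ 0 := by omega
  have hω0 : ω ≠ 0 := hω.ne_zero hm
  set ζ := ω ^ l₁ * (ω ^ l₂)⁻¹
  have hterm : ∀ t, (ω ^ t) ^ l₁ * (starRingEnd ℂ) (ω ^ t) ^ l₂ = ζ ^ t := fun t => by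
    rw [← Complex.inv_eq_conj (by rw [norm_pow, hω.norm'_eq_one hm, one_pow]), mul_pow,
      ← pow_mul, ← pow_mul, inv_pow, ← pow_mul, inv_pow, ← pow_mul, mul_comm t, mul_comm t]
  have hζ1 : ζ ≠ 1 := fun h1 =>
    hne (hω.pow_inj hl₁ hl₂ ((mul_inv_eq_one₀ (pow_ne_zero _ hω0)).mp h1))
  have hζm : ζ ^ m = 1 := by
    rw [mul_pow, inv_pow, ← pow_mul, ← pow_mul, mul_comm l₁, mul_comm l₂, pow_mul, pow_mul,
      hω.pow_eq_one, one_pow, one_pow, inv_one, mul_one]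
  simp_rw [hterm, geom_sum_eq hζ1, hζm, sub_self, zero_div]

lemma prod_range_rad_pow_eq_of_mem_Ico (hp : ∀ i, 0 < p i) {K j : ℕ} (d : ℕ → ℕ) {x : ℝ}
    (hx : x ∈ Set.Ico ((j : ℝ) / vm p K) ((j + 1 : ℝ) / vm p K)) :
    ∏ i ∈ range K, rad p i x ^ d i = ∏ i ∈ range K, rad p i (j / vm p K) ^ d i := by
  have hc : (0 : ℝ) < vm p K := by exact_mod_cast vm_pos hp K
  have hfloor {y : ℝ} (hy : y ∈ Set.Ico ((j : ℝ) / vm p K) ((j + 1 : ℝ) / vm p K)) :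
      ⌊y * vm p K⌋ = j :=
    floor_mul_eq_of_mem_Ico hc (s := j) (by simpa using hy)
  have hj : (j : ℝ) / vm p K ∈ Set.Ico ((j : ℝ) / vm p K) ((j + 1 : ℝ) / vm p K) :=
    ⟨le_rfl, div_lt_div_of_pos_right (lt_add_one _) hc⟩
  refine prod_congr rfl fun i hi => ?_
  rw [rad_eq_of_floor_eq hp (mem_range.mp hi) ((hfloor hx).trans (hfloor hj).symm)]

lemma setIntegral_rad_pow_mul_conj_rad_pow_eq_zero (hp : ∀ i, 0 < p i) {K l₁ l₂ : ℕ}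
    (hl₁ : l₁ < p K) (hl₂ : l₂ < p K) (hne : l₁ ≠ l₂) (j : ℕ) :
    ∫ x in Set.Ico ((j : ℝ) / vm p K) ((j + 1 : ℝ) / vm p K),
      rad p K x ^ l₁ * (starRingEnd ℂ) (rad p K x) ^ l₂ = 0 := by
  set c : ℝ := (vm p (K + 1) : ℝ)
  have hc : 0 < c := Nat.cast_pos.mpr (vm_pos hp _)
  have hpK : (p K : ℝ) ≠ 0 := Nat.cast_ne_zero.mpr (hp K).ne'
  set ω := Complex.exp (2 * Real.pi * Complex.I / p K)
  set r : ℤ → ℂ := fun s =>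
    Complex.exp (2 * Real.pi * Complex.I * ((s % (p K : ℤ) : ℤ) : ℂ) / (p K : ℂ))
  set h : ℤ → ℂ := fun s => r s ^ l₁ * (starRingEnd ℂ) (r s) ^ l₂
  have he : Set.Ico ((j : ℝ) / vm p K) ((j + 1 : ℝ) / vm p K)
      = Set.Ico (((j * p K : ℤ) : ℝ) / c) (((j * p K : ℤ) + (p K : ℕ)) / c) := by
    simp only [c, vm]
    push_cast
    congr 1 <;> field_simp
  have hh (t : ℕ) (ht : t ∈ range (p K)) :
      h (j * p K + t) = (ω ^ t) ^ l₁ * (starRingEnd ℂ) (ω ^ t) ^ l₂ := by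
    have hmod : ((j * p K + t : ℤ) % (p K : ℤ)) = t := by
      rw [add_comm, Int.add_mul_emod_self_right]
      exact Int.emod_eq_of_lt (by positivity) (by exact_mod_cast mem_range.mp ht)
    simp only [h, r, hmod, ω, ← Complex.exp_nat_mul]
    congr 4 <;> push_cast <;> ring
  calc _ = ∫ x in Set.Ico (((j * p K : ℤ) : ℝ) / c) (((j * p K : ℤ) + (p K : ℕ)) / c),
        h ⌊x * c⌋ := by rw [he]; rfl
    _ = c⁻¹ • ∑ t ∈ range (p K), h (j * p K + t) := setIntegral_comp_floor_mul hc h _ _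
    _ = 0 := by
      rw [sum_congr rfl hh, sum_pow_mul_conj_pow_eq_zero (Complex.isPrimitiveRoot_exp _ (hp K).ne')
        hl₁ hl₂ hne, smul_zero]

end

theorem stmt_10_general (p : ℕ → ℕ) (hp : ∀ i, 2 ≤ p i) (k l₁ l₂ n₁ n₂ j : ℕ)
    (hl12 : l₁ < l₂) (hl2 : l₂ ≤ p (k-1) - 1)
    (hn1 : n₁ ∈ Finset.Ico (l₁ * vm p (k-1)) ((l₁ + 1) * vm p (k-1)))
    (hn2 : n₂ ∈ Finset.Ico (l₂ * vm p (k-1)) ((l₂ + 1) * vm p (k-1))) :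
    ∫ x in Set.Ico ((j : ℝ) / vm p (k-1)) ((j + 1 : ℝ) / vm p (k-1)),
      vw p n₁ x * (starRingEnd ℂ) (vw p n₂ x) = 0 := by
  have hp' : ∀ i, 0 < p i := fun i => (hp i).trans_lt' two_pos
  have hl₂ : l₂ < p (k - 1) := by have := hp (k - 1); omega
  have hl₁ : l₁ < p (k - 1) := hl12.trans hl₂
  set C := (∏ i ∈ range (k - 1), rad p i (j / vm p (k - 1)) ^ vdigit p n₁ i) *
    (starRingEnd ℂ) (∏ i ∈ range (k - 1), rad p i (j / vm p (k - 1)) ^ vdigit p n₂ i)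
  calc _ = ∫ x in Set.Ico ((j : ℝ) / vm p (k-1)) ((j + 1 : ℝ) / vm p (k-1)),
        C * (rad p (k - 1) x ^ l₁ * (starRingEnd ℂ) (rad p (k - 1) x) ^ l₂) := by
        refine setIntegral_congr_fun measurableSet_Ico fun x hx => ?_
        simp only [C, vw_eq_prod_mul_rad_pow hp hl₁ hn1, vw_eq_prod_mul_rad_pow hp hl₂ hn2,
          prod_range_rad_pow_eq_of_mem_Ico hp' _ hx, map_mul, map_pow]
        ring
    _ = 0 := by
      rw [integral_const_mul, setIntegral_rad_pow_mul_conj_rad_pow_eq_zero hp' hl₁ hl₂ hl12.ne,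
        mul_zero]

/-- Vilenkin functions from different blocks of level `k` are orthogonal
in `L²(e)` for every atom `e = [j/m_{k-1}, (j+1)/m_{k-1})` of `F_{k-1}`. -/
theorem stmt_10 (p : ℕ → ℕ) (hp : ∀ i, 2 ≤ p i) (k l₁ l₂ n₁ n₂ j : ℕ) (hk : 1 ≤ k)
    (hl1 : 1 ≤ l₁) (hl12 : l₁ < l₂) (hl2 : l₂ ≤ p (k-1) - 1)
    (hn1 : n₁ ∈ Finset.Ico (l₁ * vm p (k-1)) ((l₁ + 1) * vm p (k-1)))
    (hn2 : n₂ ∈ Finset.Ico (l₂ * vm p (k-1)) ((l₂ + 1) * vm p (k-1)))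
    (hj : j < vm p (k-1)) :
    ∫ x in Set.Ico ((j : ℝ) / vm p (k-1)) ((j + 1 : ℝ) / vm p (k-1)),
      vw p n₁ x * (starRingEnd ℂ) (vw p n₂ x) = 0 :=
  stmt_10_general p hp k l₁ l₂ n₁ n₂ j hl12 hl2 hn1 hn2
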